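/- arXiv:1208.5453 — 2 statements merged into one kernel-verified Lean document; each statement's English description precedes it below -/
import Mathlib

section
/- Let g = g_{−k} ⊕ ⋯ ⊕ g_{−1} be a negatively ℤ-graded nilpotent Lie algebra, and let δ : Λ^ℓ g → Λ^{ℓ−1} g be the Chevalley–Eilenberg boundary. An ℓ-dimensional subspace e ⊆ g_{−1}, viewed via the Plücker embedding as a decomposable element ê ∈ Λ^ℓ g_{−1}, satisfies δ(ê) = 0 if and only if e is an abelian subalgebra (i.e., [e,e] = 0). -/
/-- A decomposable element `x₁ ∧ ⋯ ∧ xₙ` of the `n`-th exterior power. -/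
noncomputable def wedge {R : Type*} [CommRing R] {M : Type*} [AddCommGroup M] [Module R M]
    (n : ℕ) (v : Fin n → M) : ⋀[R]^n M :=
  ⟨ExteriorAlgebra.ιMulti R n v, ExteriorAlgebra.ιMulti_range R n (Set.mem_range_self v)⟩

/-- Given `j < k` in `Fin (n+2)`, the order-preserving inclusion of the remaining indices
`Fin n → Fin (n+2)`. -/
def removeTwo {n : ℕ} (j k : Fin (n + 2)) : Fin n → Fin (n + 2) :=
  fun m => j.succAbove ((⟨(k : ℕ) - 1, by have := k.isLt; omega⟩ : Fin (n + 1)).succAbove m)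

/-!
If `⁅e, e⁆ = 0`, every summand of `δ(x₀ ∧ ⋯ ∧ x_{n+1})` has first factor `⁅x_j, x_k⁆ = 0`.
Conversely, a bracket `⁅x_J, x_K⁆` lies in `g₋₂`, which meets `g₋₁ ⊇ e` only in `0`, so if
it is nonzero it is linearly independent of the `x_m`. Pairing the boundary with the wedge of
the dual functionals to `⁅x_J, x_K⁆` and to the `x_m`, `m ≠ J, K`, picks out the `(J, K)`
summand alone, since every other summand still contains `x_J` or `x_K`; hence the boundary
is nonzero.
-/

open exteriorPower

section DualFamily

variable {K V ι : Type*} [Field K] [AddCommGroup V] [Module K V]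

theorem LinearIndependent.exists_dual_family [DecidableEq ι] {y : ι → V}
    (hy : LinearIndependent K y) :
    ∃ φ : ι → Module.Dual K V, ∀ i j, φ i (y j) = if i = j then 1 else 0 := by
  choose φ hφ using fun i ↦ LinearMap.exists_extend (Finsupp.lapply i ∘ₗ hy.repr)
  refine ⟨φ, fun i j ↦ ?_⟩
  have hyj : y j ∈ Submodule.span K (Set.range y) := Submodule.subset_span ⟨j, rfl⟩
  have := LinearMap.congr_fun (hφ i) ⟨y j, hyj⟩
  simp only [LinearMap.comp_apply, Submodule.subtype_apply, Finsupp.lapply_apply] at this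
  rw [this, hy.repr_eq_single j ⟨y j, hyj⟩ rfl, Finsupp.single_eq_pi_single, Pi.single_apply]

end DualFamily

section Pairing

variable {R M ι : Type*} [CommRing R] [AddCommGroup M] [Module R M]

theorem wedge_eq_ιMulti (n : ℕ) (v : Fin n → M) : wedge n v = ιMulti R n v := rfl

theorem wedge_eq_zero_of_apply_eq_zero {n : ℕ} {v : Fin n → M} {t : Fin n} (hv : v t = 0) :
    wedge n v = (0 : ⋀[R]^n M) :=
  (ιMulti R n).map_coord_zero t hv

theorem pairingDual_ιMulti_eq_zero_of_apply_eq {x : ι → M} {f : ι → Module.Dual R M}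
    (h₀ : ∀ ⦃i j⦄, i ≠ j → f i (x j) = 0) {n : ℕ} (a : Fin n → ι) {v : Fin n → M}
    {t : Fin n} {i : ι} (hv : v t = x i) (hi : i ∉ Set.range a) :
    pairingDual R M n (ιMulti R n (f ∘ a)) (ιMulti R n v) = 0 := by
  rw [pairingDual_ιMulti_ιMulti]
  refine Matrix.det_eq_zero_of_row_eq_zero t fun s ↦ ?_
  rw [Matrix.of_apply, Function.comp_apply, hv]
  exact h₀ fun h ↦ hi ⟨s, h⟩

end Pairing

section RemoveTwo

variable {n : ℕ} {j k : Fin (n + 2)}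

theorem Fin.succAbove_mk_sub_one_of_lt (h : j < k) :
    j.succAbove (⟨(k : ℕ) - 1, by have := k.isLt; omega⟩ : Fin (n + 1)) = k := by
  rw [Fin.succAbove_of_le_castSucc] <;> simp only [Fin.ext_iff, Fin.le_def, Fin.val_succ,
    Fin.val_castSucc] <;> omega

theorem strictMono_removeTwo (j k : Fin (n + 2)) : StrictMono (removeTwo j k) :=
  (Fin.strictMono_succAbove j).comp (Fin.strictMono_succAbove _)

theorem range_removeTwo (h : j < k) : Set.range (removeTwo j k) = {j, k}ᶜ := by
  change Set.range (j.succAbove ∘ _) = _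
  rw [Set.range_comp, Fin.range_succAbove,
    Set.image_compl_eq_range_sdiff_image Fin.succAbove_right_injective, Fin.range_succAbove,
    Set.image_singleton, Fin.succAbove_mk_sub_one_of_lt h]
  ext m
  simp

theorem exists_mem_pair_notMem_pair {J K : Fin (n + 2)} (hjk : j < k) (hJK : J < K)
    (hne : (j, k) ≠ (J, K)) : ∃ m ∈ ({J, K} : Set (Fin (n + 2))), m ∉ ({j, k} : Set _) := by
  by_contra! h
  simp only [Set.mem_insert_iff, Set.mem_singleton_iff, forall_eq_or_imp, forall_eq] at h
  simp only [ne_eq, Prod.mk.injEq, Fin.ext_iff, Fin.lt_def] at *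
  omega

end RemoveTwo

section LieSpan

variable {R L ι : Type*} [CommRing R] [LieRing L] [LieAlgebra R L]

theorem lie_eq_zero_of_forall_lt [LinearOrder ι] {x : ι → L}
    (h : ∀ i j, i < j → ⁅x i, x j⁆ = 0) (i j : ι) : ⁅x i, x j⁆ = 0 := by
  rcases lt_trichotomy i j with hij | rfl | hji
  · exact h i j hij
  · exact lie_self _
  · rw [← lie_skew, h j i hji, neg_zero]

theorem lie_eq_zero_of_mem_span {x : ι → L} (h : ∀ i j, ⁅x i, x j⁆ = 0) {a b : L}
    (ha : a ∈ Submodule.span R (Set.range x)) (hb : b ∈ Submodule.span R (Set.range x)) :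
    ⁅a, b⁆ = 0 := by
  have := LinearMap.BilinMap.apply_apply_mem_of_mem_span ⊥ _ _
    (LieModule.toEnd R L L : L →ₗ[R] Module.End R L)
    (by rintro _ ⟨i, rfl⟩ _ ⟨j, rfl⟩; simp [h]) a b ha hb
  simpa using this

end LieSpan

section Boundary

variable {R : Type*} [CommRing R] {L : Type*} [LieRing L] [Module R L] {n : ℕ}

def boundaryTerm (x : Fin (n + 2) → L) (j k : Fin (n + 2)) : Fin (n + 1) → L :=
  Fin.cons ⁅x j, x k⁆ (x ∘ removeTwo j k)

variable (R) in
noncomputable def ceBoundary (x : Fin (n + 2) → L) : ⋀[R]^(n + 1) L :=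
  ∑ p ∈ Finset.univ.filter (fun p : Fin (n + 2) × Fin (n + 2) => p.1 < p.2),
    ((-1 : R) ^ ((p.1 : ℕ) + (p.2 : ℕ) + 1)) • wedge (n + 1) (boundaryTerm x p.1 p.2)

theorem ceBoundary_eq_zero_of_lie_eq_zero {x : Fin (n + 2) → L}
    (hx : ∀ j k, ⁅x j, x k⁆ = 0) : ceBoundary R x = 0 :=
  Finset.sum_eq_zero fun p _ ↦ by
    rw [wedge_eq_zero_of_apply_eq_zero (t := 0) (hx p.1 p.2), smul_zero]

end Boundary

section BoundaryField

variable {R : Type*} [Field R] {L : Type*} [LieRing L] [Module R L] {n : ℕ}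

theorem exists_dual_boundaryTerm {x : Fin (n + 2) → L} (hx : LinearIndependent R x)
    {J K : Fin (n + 2)} (hJK : J < K) (hb : ⁅x J, x K⁆ ∉ Submodule.span R (Set.range x)) :
    ∃ f : Module.Dual R (⋀[R]^(n + 1) L), ∀ j k, j < k →
      f (wedge (n + 1) (boundaryTerm x j k)) = if (j, k) = (J, K) then 1 else 0 := by
  classical
  set y : Fin (n + 3) → L := Fin.cons ⁅x J, x K⁆ x
  have hy : LinearIndependent R y := linearIndependent_finCons.mpr ⟨hx, hb⟩
  obtain ⟨φ, hφ⟩ := hy.exists_dual_family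
  have h₁ : ∀ i, φ i (y i) = 1 := fun i ↦ (hφ i i).trans (if_pos rfl)
  have h₀ : ∀ ⦃i j⦄, i ≠ j → φ i (y j) = 0 := fun i j h ↦ (hφ i j).trans (if_neg h)
  let a : Fin (n + 1) ↪o Fin (n + 3) := OrderEmbedding.ofStrictMono
    (Fin.cons 0 (Fin.succ ∘ removeTwo J K))
    (Fin.strictMono_cons.mpr
      ⟨fun _ ↦ Fin.succ_pos _, Fin.strictMono_succ.comp (strictMono_removeTwo J K)⟩)
  refine ⟨pairingDual R L (n + 1) (ιMulti R (n + 1) (φ ∘ a)), fun j k hjk ↦ ?_⟩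
  split_ifs with h
  · obtain ⟨rfl, rfl⟩ := Prod.mk.inj h
    have hterm : boundaryTerm x j k = y ∘ a := by
      ext t; cases t using Fin.cases <;> rfl
    rw [wedge_eq_ιMulti, hterm]
    exact pairingDual_apply_apply_eq_one y φ h₁ h₀ (n + 1) a
  · obtain ⟨m, hmJK, hmjk⟩ := exists_mem_pair_notMem_pair hjk hJK h
    obtain ⟨t, ht⟩ : m ∈ Set.range (removeTwo j k) := by rwa [range_removeTwo hjk]
    refine pairingDual_ιMulti_eq_zero_of_apply_eq h₀ a (t := t.succ) (i := m.succ) ?_ ?_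
    · simp [boundaryTerm, ht, y]
    · rintro ⟨s, hs⟩
      cases s using Fin.cases with
      | zero => exact Fin.succ_ne_zero m hs.symm
      | succ s =>
        have : removeTwo J K s = m := Fin.succ_injective _ hs
        exact (Set.ext_iff.mp (range_removeTwo hJK) m).mp ⟨s, this⟩ hmJK

theorem ceBoundary_ne_zero {x : Fin (n + 2) → L} (hx : LinearIndependent R x)
    {J K : Fin (n + 2)} (hJK : J < K) (hb : ⁅x J, x K⁆ ∉ Submodule.span R (Set.range x)) :
    ceBoundary R x ≠ 0 := by
  obtain ⟨f, hf⟩ := exists_dual_boundaryTerm hx hJK hb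
  have hf_ceBoundary : f (ceBoundary R x) = (-1) ^ ((J : ℕ) + K + 1) := by
    rw [ceBoundary, map_sum, Finset.sum_congr rfl fun p hp ↦ by
      rw [map_smul, hf p.1 p.2 (Finset.mem_filter.mp hp).2]]
    simp [hJK]
  intro h0
  rw [h0, map_zero] at hf_ceBoundary
  exact pow_ne_zero _ (neg_ne_zero.mpr one_ne_zero) hf_ceBoundary.symm

end BoundaryField

theorem ce_boundary_vanishes_iff_abelian_general {R : Type*} [Field R] {L : Type*} [LieRing L]
    [LieAlgebra R L]
    (g : ℤ → Submodule R L)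
    (hg : DirectSum.IsInternal g)
    (hbr : ∀ (ℓ m : ℤ), ∀ x ∈ g ℓ, ∀ y ∈ g m, ⁅x, y⁆ ∈ g (ℓ + m))
    (n : ℕ)
    (δ : (⋀[R]^(n + 2) L) →ₗ[R] (⋀[R]^(n + 1) L))
    (hδ : ∀ x : Fin (n + 2) → L,
      δ (wedge (n + 2) x) =
        ∑ p ∈ Finset.univ.filter (fun p : Fin (n + 2) × Fin (n + 2) => p.1 < p.2),
          ((-1 : R) ^ ((p.1 : ℕ) + (p.2 : ℕ) + 1)) •
            wedge (n + 1) (Fin.cons ⁅x p.1, x p.2⁆ (x ∘ removeTwo p.1 p.2)))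
    (e : Submodule R L) (he : e ≤ g (-1))
    (x : Fin (n + 2) → L) (hxe : ∀ i, x i ∈ e)
    (hspan : e = Submodule.span R (Set.range x)) (hindep : LinearIndependent R x) :
    δ (wedge (n + 2) x) = 0 ↔ (∀ a ∈ e, ∀ b ∈ e, ⁅a, b⁆ = 0) := by
  have hδx : δ (wedge (n + 2) x) = ceBoundary R x := hδ x
  rw [hδx]
  constructor
  · intro h0
    have hdisj : Disjoint (g (-1)) (g (-2)) :=
      hg.submodule_iSupIndep.pairwiseDisjoint (by norm_num)
    have hlt : ∀ j k, j < k → ⁅x j, x k⁆ = 0 := by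
      intro j k hjk
      by_contra hne
      refine ceBoundary_ne_zero hindep hjk (fun hmem ↦ hne ?_) h0
      have hmem₂ : ⁅x j, x k⁆ ∈ g (-2) := by
        simpa using hbr (-1) (-1) _ (he (hxe j)) _ (he (hxe k))
      exact Submodule.disjoint_def.mp hdisj _ (he (hspan ▸ hmem)) hmem₂
    rw [hspan]
    exact fun a ha b hb ↦ lie_eq_zero_of_mem_span (lie_eq_zero_of_forall_lt hlt) ha hb
  · exact fun habel ↦ ceBoundary_eq_zero_of_lie_eq_zero fun j k ↦ habel _ (hxe j) _ (hxe k)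

/-- For a negatively `ℤ`-graded nilpotent Lie algebra `g = g_{−k} ⊕ ⋯ ⊕ g_{−1}` with
Chevalley–Eilenberg boundary `δ`, an `ℓ`-dimensional subspace `e ⊆ g_{−1}` with basis
`x₁, …, x_ℓ` satisfies `δ(x₁ ∧ ⋯ ∧ x_ℓ) = 0` if and only if `e` is an abelian
subalgebra, i.e. `⁅e, e⁆ = 0`. -/
theorem ce_boundary_vanishes_iff_abelian {R : Type*} [Field R] {L : Type*} [LieRing L]
    [LieAlgebra R L]
    (g : ℤ → Submodule R L)
    (hg : DirectSum.IsInternal g)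
    (hneg : ∀ ℓ : ℤ, 0 ≤ ℓ → g ℓ = ⊥)
    (hbr : ∀ (ℓ m : ℤ), ∀ x ∈ g ℓ, ∀ y ∈ g m, ⁅x, y⁆ ∈ g (ℓ + m))
    (n : ℕ)
    (δ : (⋀[R]^(n + 2) L) →ₗ[R] (⋀[R]^(n + 1) L))
    (hδ : ∀ x : Fin (n + 2) → L,
      δ (wedge (n + 2) x) =
        ∑ p ∈ Finset.univ.filter (fun p : Fin (n + 2) × Fin (n + 2) => p.1 < p.2),
          ((-1 : R) ^ ((p.1 : ℕ) + (p.2 : ℕ) + 1)) •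
            wedge (n + 1) (Fin.cons ⁅x p.1, x p.2⁆ (x ∘ removeTwo p.1 p.2)))
    (e : Submodule R L) (he : e ≤ g (-1))
    (x : Fin (n + 2) → L) (hxe : ∀ i, x i ∈ e)
    (hspan : e = Submodule.span R (Set.range x)) (hindep : LinearIndependent R x) :
    δ (wedge (n + 2) x) = 0 ↔ (∀ a ∈ e, ∀ b ∈ e, ⁅a, b⁆ = 0) :=
  ce_boundary_vanishes_iff_abelian_general g hg hbr n δ hδ e he x hxe hspan hindep
end

section
/- Let Φ be a root system with positive system Δ⁺, Weyl group W, and let T = Σ_{i∈I} T_i for a subset I of simple-root indices (fundamental coweights T_i). For w, w' in W with Δ(w), Δ(w') ⊆ {α ∈ Δ⁺ : α(T) = 1}, if Δ(w') = Δ(w) ∪ {α} for a single root α ∉ Δ(w), then length(w') = length(w) + 1 and w' = r_α w, where r_α is the reflection in α. -/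
/-- A (crystallographic, reduced) root system in a real vector space `V`, together with a
choice of positive roots and a base of simple roots `σ₁, …, σ_r` (forming a basis of `V`). -/
structure RootSystemData (V : Type*) [AddCommGroup V] [Module ℝ V] (r : ℕ) where
  /-- The finite set of roots. -/
  Φ : Finset V
  /-- The positive roots. -/
  pos : Finset V
  /-- The simple roots. -/
  σ : Fin r → V
  /-- The coroot functional attached to each root. -/
  coroot : V → Module.Dual ℝ V
  nonzero : ∀ α ∈ Φ, α ≠ (0 : V)
  neg_mem : ∀ α ∈ Φ, -α ∈ Φ
  pairing_self : ∀ α ∈ Φ, coroot α α = 2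
  reflect_mem : ∀ α ∈ Φ, ∀ β ∈ Φ, β - coroot α β • α ∈ Φ
  crystallographic : ∀ α ∈ Φ, ∀ β ∈ Φ, ∃ n : ℤ, coroot α β = (n : ℝ)
  pos_subset : pos ⊆ Φ
  pos_or_neg : ∀ α ∈ Φ, α ∈ pos ∨ -α ∈ pos
  pos_not_neg : ∀ α ∈ pos, -α ∉ pos
  simple_mem : ∀ i, σ i ∈ pos
  indep : LinearIndependent ℝ σ
  spans : ⊤ ≤ Submodule.span ℝ (Set.range σ)
  pos_sum : ∀ α ∈ pos, ∃ c : Fin r → ℕ, α = ∑ i, (c i : ℝ) • σ i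

namespace RootSystemData

variable {V : Type*} [AddCommGroup V] [Module ℝ V] {r : ℕ}

/-- The reflection in the root `α`. -/
noncomputable def refl (RD : RootSystemData V r) (α : V) (hα : α ∈ RD.Φ) : V ≃ₗ[ℝ] V :=
  Module.reflection (RD.pairing_self α hα)

/-- The simple reflection attached to the simple root `σ i`. -/
noncomputable def simpleRefl (RD : RootSystemData V r) (i : Fin r) : V ≃ₗ[ℝ] V :=
  RD.refl (RD.σ i) (RD.pos_subset (RD.simple_mem i))

/-- The Weyl group: the subgroup of `GL(V)` generated by the simple reflections. -/
noncomputable def weylGroup (RD : RootSystemData V r) : Subgroup (V ≃ₗ[ℝ] V) :=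
  Subgroup.closure (Set.range RD.simpleRefl)

/-- The length of `w`: the minimal length of a word in the simple reflections equal to `w`. -/
noncomputable def length (RD : RootSystemData V r) (w : V ≃ₗ[ℝ] V) : ℕ :=
  sInf {n | ∃ l : List (V ≃ₗ[ℝ] V), l.length = n ∧
    (∀ s ∈ l, ∃ i, s = RD.simpleRefl i) ∧ l.prod = w}

open scoped Classical in
/-- The inversion set `Δ(w) = Δ⁺ ∩ w(Δ⁻)`. -/
noncomputable def inversions (RD : RootSystemData V r) (w : V ≃ₗ[ℝ] V) : Finset V :=
  RD.pos.filter fun α => -(w.symm α) ∈ RD.pos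

/-- The basis of simple roots. -/
noncomputable def simpleBasis (RD : RootSystemData V r) : Module.Basis (Fin r) ℝ V :=
  Module.Basis.mk RD.indep RD.spans

/-- The half-sum of the positive roots. -/
noncomputable def rho (RD : RootSystemData V r) : V := (2 : ℝ)⁻¹ • ∑ α ∈ RD.pos, α

end RootSystemData

/-!
With `v = w⁻¹ w'`, the hypothesis `Δ(w') = Δ(w) ∪ {α}` gives `Δ(v) = {w⁻¹ α}`. An element of
the Weyl group with a single inversion is a simple reflection `s_i` (it sends `σ_i` to a negative
root, and `v⁻¹ s_i` then fixes the positive system, so it is trivial). Hence `w' = w s_i` with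
`w σ_i = α`, so `w' = (w s_i w⁻¹) w = r_α w`; and since `w' σ_i = -α` is negative, the exchange
condition shortens any reduced word of `w'` to one of `w`, giving `ℓ(w') = ℓ(w) + 1`.
-/
namespace RootSystemData

variable {V : Type*} [AddCommGroup V] [Module ℝ V] {r : ℕ} (RD : RootSystemData V r)

section Reflections

lemma simple_mem_Φ (i : Fin r) : RD.σ i ∈ RD.Φ := RD.pos_subset (RD.simple_mem i)

lemma refl_apply {a : V} (ha : a ∈ RD.Φ) (x : V) : RD.refl a ha x = x - RD.coroot a x • a :=
  Module.reflection_apply x _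

lemma refl_mem_Φ {a : V} (ha : a ∈ RD.Φ) {x : V} (hx : x ∈ RD.Φ) : RD.refl a ha x ∈ RD.Φ := by
  rw [RD.refl_apply]
  exact RD.reflect_mem a ha x hx

lemma simpleRefl_mem_Φ (i : Fin r) {x : V} (hx : x ∈ RD.Φ) : RD.simpleRefl i x ∈ RD.Φ :=
  RD.refl_mem_Φ _ hx

lemma simpleRefl_apply (i : Fin r) (x : V) :
    RD.simpleRefl i x = x - RD.coroot (RD.σ i) x • RD.σ i :=
  RD.refl_apply _ x

lemma simpleRefl_apply_self (i : Fin r) : RD.simpleRefl i (RD.σ i) = -RD.σ i :=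
  Module.reflection_apply_self (RD.pairing_self _ (RD.simple_mem_Φ i))

lemma simpleRefl_simpleRefl_apply (i : Fin r) (x : V) : RD.simpleRefl i (RD.simpleRefl i x) = x :=
  Module.involutive_reflection (RD.pairing_self _ (RD.simple_mem_Φ i)) x

lemma simpleRefl_mul_self (i : Fin r) : RD.simpleRefl i * RD.simpleRefl i = 1 :=
  mul_eq_one_iff_eq_inv.mpr (Module.reflection_inv (RD.pairing_self _ (RD.simple_mem_Φ i))).symm

end Reflections

section WeylGroup

def IsWord (l : List (V ≃ₗ[ℝ] V)) : Prop := ∀ s ∈ l, ∃ i, s = RD.simpleRefl i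

variable {RD}

lemma isWord_append {l l' : List (V ≃ₗ[ℝ] V)} :
    RD.IsWord (l ++ l') ↔ RD.IsWord l ∧ RD.IsWord l' :=
  List.forall_mem_append

lemma isWord_cons {s : V ≃ₗ[ℝ] V} {l : List (V ≃ₗ[ℝ] V)} :
    RD.IsWord (s :: l) ↔ (∃ i, s = RD.simpleRefl i) ∧ RD.IsWord l :=
  List.forall_mem_cons

lemma isWord_singleton (i : Fin r) : RD.IsWord [RD.simpleRefl i] := by
  simp [IsWord]

variable (RD)

lemma simpleRefl_mem_weylGroup (i : Fin r) : RD.simpleRefl i ∈ RD.weylGroup :=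
  Subgroup.subset_closure ⟨i, rfl⟩

lemma IsWord.prod_mem {l : List (V ≃ₗ[ℝ] V)} (hl : RD.IsWord l) : l.prod ∈ RD.weylGroup :=
  list_prod_mem fun s hs => by
    obtain ⟨i, rfl⟩ := hl s hs
    exact RD.simpleRefl_mem_weylGroup i

lemma exists_isWord_prod_eq {u : V ≃ₗ[ℝ] V} (hu : u ∈ RD.weylGroup) :
    ∃ l, RD.IsWord l ∧ l.prod = u := by
  have hu' : u ∈ (Subgroup.closure (Set.range RD.simpleRefl)).toSubmonoid := hu
  rw [Subgroup.closure_toSubmonoid] at hu'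
  obtain ⟨l, hl, rfl⟩ := Submonoid.exists_list_of_mem_closure hu'
  refine ⟨l, fun s hs => ?_, rfl⟩
  rcases hl s hs with ⟨i, rfl⟩ | ⟨i, hi⟩
  · exact ⟨i, rfl⟩
  · refine ⟨i, ?_⟩
    rw [← inv_inv s, ← hi, inv_eq_of_mul_eq_one_right (RD.simpleRefl_mul_self i)]

open scoped Pointwise in
lemma weylGroup_le_stabilizer_Φ :
    RD.weylGroup ≤ MulAction.stabilizer (V ≃ₗ[ℝ] V) (RD.Φ : Set V) := by
  refine (Subgroup.closure_le _).mpr ?_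
  rintro _ ⟨i, rfl⟩
  exact (Module.bijOn_reflection_of_mapsTo (RD.pairing_self _ (RD.simple_mem_Φ i))
    fun x hx => RD.refl_mem_Φ (RD.simple_mem_Φ i) hx).image_eq

lemma apply_mem_Φ {u : V ≃ₗ[ℝ] V} (hu : u ∈ RD.weylGroup) {x : V} (hx : x ∈ RD.Φ) :
    u x ∈ RD.Φ := by
  have hΦ : u '' RD.Φ = RD.Φ := RD.weylGroup_le_stabilizer_Φ hu
  exact Finset.mem_coe.mp (hΦ.subset ⟨x, hx, rfl⟩)

lemma symm_apply_mem_Φ {u : V ≃ₗ[ℝ] V} (hu : u ∈ RD.weylGroup) {x : V} (hx : x ∈ RD.Φ) :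
    u.symm x ∈ RD.Φ :=
  RD.apply_mem_Φ (inv_mem hu) hx

end WeylGroup

section Positivity

lemma simpleBasis_apply (i : Fin r) : RD.simpleBasis i = RD.σ i :=
  Module.Basis.mk_apply _ _ i

lemma repr_nonneg {β : V} (hβ : β ∈ RD.pos) (j : Fin r) : 0 ≤ RD.simpleBasis.repr β j := by
  obtain ⟨c, rfl⟩ := RD.pos_sum β hβ
  simp_rw [← RD.simpleBasis_apply, Module.Basis.repr_sum_self]
  exact Nat.cast_nonneg _

lemma neg_mem_pos_of_notMem_pos {x : V} (hx : x ∈ RD.Φ) (h : x ∉ RD.pos) : -x ∈ RD.pos :=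
  (RD.pos_or_neg x hx).resolve_left h

lemma mem_pos_of_repr_nonneg {x : V} (hx : x ∈ RD.Φ) (h : ∀ j, 0 ≤ RD.simpleBasis.repr x j) :
    x ∈ RD.pos := by
  by_contra hpos
  have hneg := RD.neg_mem_pos_of_notMem_pos hx hpos
  have hrepr : RD.simpleBasis.repr x = 0 :=
    Finsupp.ext fun j => le_antisymm (by simpa using RD.repr_nonneg hneg j) (h j)
  exact RD.nonzero x hx (by simpa using hrepr)

lemma smul_mem_pos {δ : V} (hδ : δ ∈ RD.pos) {c : ℝ} (hc : 0 ≤ c) (hcδ : c • δ ∈ RD.Φ) :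
    c • δ ∈ RD.pos :=
  RD.mem_pos_of_repr_nonneg hcδ fun j => by
    simpa using mul_nonneg hc (RD.repr_nonneg hδ j)

lemma repr_simpleRefl_of_ne {i j : Fin r} (hij : i ≠ j) (x : V) :
    RD.simpleBasis.repr (RD.simpleRefl i x) j = RD.simpleBasis.repr x j := by
  rw [RD.simpleRefl_apply, ← RD.simpleBasis_apply]
  simp [hij]

lemma eq_smul_simple_of_simpleRefl_notMem_pos {β : V} (hβ : β ∈ RD.pos) {i : Fin r}
    (h : RD.simpleRefl i β ∉ RD.pos) : β = RD.simpleBasis.repr β i • RD.σ i := by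
  have hneg := RD.neg_mem_pos_of_notMem_pos (RD.simpleRefl_mem_Φ i (RD.pos_subset hβ)) h
  apply RD.simpleBasis.repr.injective
  ext j
  rcases eq_or_ne i j with rfl | hij
  · simp [← RD.simpleBasis_apply]
  · have hle : RD.simpleBasis.repr β j ≤ 0 := by
      simpa [RD.repr_simpleRefl_of_ne hij] using RD.repr_nonneg hneg j
    simp [← RD.simpleBasis_apply, hij, le_antisymm hle (RD.repr_nonneg hβ j)]

end Positivity

section Conjugation

/-- Uniqueness of the coroot; it rests on the finiteness of `Φ`. -/
lemma coroot_eq_of_mapsTo {a : V} (ha : a ∈ RD.Φ) {f : Module.Dual ℝ V} (hf : f a = 2)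
    (hmaps : Set.MapsTo (Module.preReflection a f) RD.Φ RD.Φ) : f = RD.coroot a := by
  have hspan : Submodule.span ℝ (RD.Φ : Set V) = ⊤ :=
    top_unique <| RD.spans.trans <| Submodule.span_mono <| by
      rintro _ ⟨i, rfl⟩
      exact RD.simple_mem_Φ i
  exact Module.Dual.eq_of_preReflection_mapsTo RD.Φ.finite_toSet hspan hf hmaps
    (RD.pairing_self a ha) fun x hx => RD.reflect_mem a ha x hx

lemma mul_simpleRefl_mul_inv {u : V ≃ₗ[ℝ] V} (hu : u ∈ RD.weylGroup) (i : Fin r) {a : V}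
    (ha : a ∈ RD.Φ) {c : ℝ} (hua : u (RD.σ i) = c • a) :
    u * RD.simpleRefl i * u⁻¹ = RD.refl a ha := by
  set f : Module.Dual ℝ V := c • (RD.coroot (RD.σ i)).comp u.symm.toLinearMap
  have hconj : ∀ x, (u * RD.simpleRefl i * u⁻¹) x = Module.preReflection a f x := by
    intro x
    change u (RD.simpleRefl i (u.symm x)) = _
    rw [RD.simpleRefl_apply, map_sub, map_smul, hua, Module.preReflection_apply, smul_smul]
    simp [f, mul_comm]
  have hfa : f a = 2 := by
    have hσ : c • u.symm a = RD.σ i := by rw [← map_smul, ← hua, u.symm_apply_apply]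
    simp only [f, LinearMap.smul_apply, LinearMap.comp_apply, LinearEquiv.coe_coe, smul_eq_mul]
    rw [← smul_eq_mul, ← map_smul, hσ, RD.pairing_self _ (RD.simple_mem_Φ i)]
  have hmaps : Set.MapsTo (Module.preReflection a f) RD.Φ RD.Φ := fun x hx =>
    hconj x ▸ RD.apply_mem_Φ
      (mul_mem (mul_mem hu (RD.simpleRefl_mem_weylGroup i)) (inv_mem hu)) hx
  ext x
  rw [hconj, RD.refl_apply, Module.preReflection_apply, RD.coroot_eq_of_mapsTo ha hfa hmaps]

end Conjugation

section Length

variable {RD}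

/-- The exchange condition. -/
lemma IsWord.exists_prod_mul_simpleRefl {l : List (V ≃ₗ[ℝ] V)} (hl : RD.IsWord l) {i : Fin r}
    (hneg : -(l.prod (RD.σ i)) ∈ RD.pos) :
    ∃ l', RD.IsWord l' ∧ l'.length + 1 = l.length ∧ l'.prod = l.prod * RD.simpleRefl i := by
  induction l with
  | nil => exact absurd hneg (RD.pos_not_neg _ (RD.simple_mem i))
  | cons s t ih =>
    obtain ⟨⟨j, rfl⟩, ht⟩ := isWord_cons.mp hl
    rw [List.prod_cons] at hneg ⊢
    by_cases htneg : -(t.prod (RD.σ i)) ∈ RD.pos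
    · obtain ⟨l', hl', hlen, hprod⟩ := ih ht htneg
      refine ⟨RD.simpleRefl j :: l', isWord_cons.mpr ⟨⟨j, rfl⟩, hl'⟩, by simp [hlen], ?_⟩
      rw [List.prod_cons, hprod, mul_assoc]
    · -- `t σ_i` is positive but `s_j` makes it negative, so `t σ_i` is a multiple of `σ_j`
      have htpos : t.prod (RD.σ i) ∈ RD.pos := by
        by_contra htpos
        exact htneg (RD.neg_mem_pos_of_notMem_pos
          (RD.apply_mem_Φ (ht.prod_mem RD) (RD.simple_mem_Φ i)) htpos)
      have hconj := RD.mul_simpleRefl_mul_inv (ht.prod_mem RD) i (RD.simple_mem_Φ j)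
        (RD.eq_smul_simple_of_simpleRefl_notMem_pos htpos fun h => RD.pos_not_neg _ h hneg)
      have hcomm : t.prod * RD.simpleRefl i = RD.simpleRefl j * t.prod :=
        mul_inv_eq_iff_eq_mul.mp hconj
      refine ⟨t, ht, rfl, ?_⟩
      rw [mul_assoc, hcomm, ← mul_assoc, RD.simpleRefl_mul_self, one_mul]

lemma length_le {l : List (V ≃ₗ[ℝ] V)} (hl : RD.IsWord l) : RD.length l.prod ≤ l.length :=
  Nat.sInf_le ⟨l, rfl, hl, rfl⟩

variable (RD)

lemma exists_isWord_length_eq {u : V ≃ₗ[ℝ] V} (hu : u ∈ RD.weylGroup) :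
    ∃ l, RD.IsWord l ∧ l.prod = u ∧ l.length = RD.length u := by
  obtain ⟨l₀, hl₀, hprod₀⟩ := RD.exists_isWord_prod_eq hu
  obtain ⟨l, hlen, hl, hprod⟩ : RD.length u ∈
      {n | ∃ l : List (V ≃ₗ[ℝ] V), l.length = n ∧ RD.IsWord l ∧ l.prod = u} :=
    Nat.sInf_mem ⟨l₀.length, l₀, rfl, hl₀, hprod₀⟩
  exact ⟨l, hl, hprod, hlen⟩

lemma length_mul_simpleRefl_le {u : V ≃ₗ[ℝ] V} (hu : u ∈ RD.weylGroup) (i : Fin r) :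
    RD.length (u * RD.simpleRefl i) ≤ RD.length u + 1 := by
  obtain ⟨l, hl, rfl, hlen⟩ := RD.exists_isWord_length_eq hu
  have hword := isWord_append.mpr ⟨hl, isWord_singleton i⟩
  simpa [hlen] using length_le hword

lemma length_mul_simpleRefl_add_one_le {u : V ≃ₗ[ℝ] V} (hu : u ∈ RD.weylGroup) {i : Fin r}
    (hneg : -(u (RD.σ i)) ∈ RD.pos) : RD.length (u * RD.simpleRefl i) + 1 ≤ RD.length u := by
  obtain ⟨l, hl, rfl, hlen⟩ := RD.exists_isWord_length_eq hu
  obtain ⟨l', hl', hlen', hprod⟩ := hl.exists_prod_mul_simpleRefl hneg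
  have := length_le hl'
  rw [hprod] at this
  omega

lemma exists_neg_mem_pos_of_ne_one {u : V ≃ₗ[ℝ] V} (hu : u ∈ RD.weylGroup) (hne : u ≠ 1) :
    ∃ i, -(u (RD.σ i)) ∈ RD.pos := by
  obtain ⟨l, hl, rfl, hlen⟩ := RD.exists_isWord_length_eq hu
  obtain ⟨l, s, rfl⟩ : ∃ l' s, l = l' ++ [s] :=
    (List.eq_nil_or_concat' l).resolve_left fun h => hne (by rw [h, List.prod_nil])
  obtain ⟨hl', hs⟩ := isWord_append.mp hl
  obtain ⟨j, rfl⟩ := hs s (List.mem_singleton_self s)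
  refine ⟨j, ?_⟩
  -- otherwise the exchange condition would shorten the reduced word `l ++ [s_j]`
  by_contra hpos
  have hneg : -(l.prod (RD.σ j)) ∈ RD.pos := by
    refine RD.neg_mem_pos_of_notMem_pos (RD.apply_mem_Φ (hl'.prod_mem RD) (RD.simple_mem_Φ j))
      fun h => hpos ?_
    simpa [RD.simpleRefl_apply_self] using h
  have hshorter := RD.length_mul_simpleRefl_add_one_le (hl'.prod_mem RD) hneg
  have := length_le hl'
  simp only [List.prod_append, List.prod_singleton, List.length_append,
    List.length_singleton] at hlen
  omega

lemma eq_one_of_forall_mem_pos {u : V ≃ₗ[ℝ] V} (hu : u ∈ RD.weylGroup)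
    (h : ∀ β ∈ RD.pos, u β ∈ RD.pos) : u = 1 := by
  by_contra hne
  obtain ⟨i, hi⟩ := RD.exists_neg_mem_pos_of_ne_one hu hne
  exact RD.pos_not_neg _ (h _ (RD.simple_mem i)) hi

end Length

section Inversions

lemma mem_inversions {x : V ≃ₗ[ℝ] V} {β : V} :
    β ∈ RD.inversions x ↔ β ∈ RD.pos ∧ -(x.symm β) ∈ RD.pos := by
  simp [inversions]

lemma mem_inversions_inv_mul_iff {w w' : V ≃ₗ[ℝ] V} (hw : w ∈ RD.weylGroup)
    (hsub : RD.inversions w ⊆ RD.inversions w') {β : V} :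
    β ∈ RD.inversions (w⁻¹ * w') ↔ w β ∈ RD.inversions w' ∧ w β ∉ RD.inversions w := by
  have hsymm : (w⁻¹ * w').symm β = w'.symm (w β) := rfl
  simp only [RD.mem_inversions, hsymm, w.symm_apply_apply]
  constructor
  · rintro ⟨hβ, hβ'⟩
    refine ⟨⟨?_, hβ'⟩, fun h => RD.pos_not_neg _ hβ h.2⟩
    by_contra hwβ
    -- otherwise `-(w β) ∈ Δ(w) ⊆ Δ(w')`, which says that `w'⁻¹ (w β)` is positive
    have hwβ' := RD.neg_mem_pos_of_notMem_pos (RD.apply_mem_Φ hw (RD.pos_subset hβ)) hwβ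
    have hmem := hsub (RD.mem_inversions.mpr ⟨hwβ', by simpa using hβ⟩)
    exact RD.pos_not_neg _ (by simpa using (RD.mem_inversions.mp hmem).2) hβ'
  · rintro ⟨⟨hwβ, hβ'⟩, hnot⟩
    refine ⟨?_, hβ'⟩
    by_contra hβ
    have hβΦ : β ∈ RD.Φ := by simpa using RD.symm_apply_mem_Φ hw (RD.pos_subset hwβ)
    exact hnot ⟨hwβ, RD.neg_mem_pos_of_notMem_pos hβΦ hβ⟩

lemma inv_mul_simpleRefl_mem_pos {v : V ≃ₗ[ℝ] V} (hv : v ∈ RD.weylGroup) {i : Fin r}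
    (hΔ : RD.inversions v = {RD.σ i}) {β : V} (hβ : β ∈ RD.pos) :
    (v⁻¹ * RD.simpleRefl i) β ∈ RD.pos := by
  change v.symm (RD.simpleRefl i β) ∈ RD.pos
  have hvσ : -(v.symm (RD.σ i)) ∈ RD.pos :=
    (RD.mem_inversions.mp (hΔ ▸ Finset.mem_singleton_self _)).2
  -- `s_i` permutes the positive roots that are not multiples of `σ_i`
  by_cases hsβ : RD.simpleRefl i β ∈ RD.pos
  · by_contra hneg
    have hmem : RD.simpleRefl i β ∈ RD.inversions v := RD.mem_inversions.mpr
      ⟨hsβ, RD.neg_mem_pos_of_notMem_pos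
        (RD.symm_apply_mem_Φ hv (RD.simpleRefl_mem_Φ i (RD.pos_subset hβ))) hneg⟩
    rw [hΔ, Finset.mem_singleton] at hmem
    have hβσ : β = -RD.σ i := by
      rw [← RD.simpleRefl_simpleRefl_apply i β, hmem, RD.simpleRefl_apply_self]
    exact RD.pos_not_neg _ (RD.simple_mem i) (hβσ ▸ hβ)
  · have hβσ := RD.eq_smul_simple_of_simpleRefl_notMem_pos hβ hsβ
    have himage : v.symm (RD.simpleRefl i β) = RD.simpleBasis.repr β i • -v.symm (RD.σ i) := by
      rw [hβσ, map_smul, RD.simpleRefl_apply_self, map_smul, map_neg, ← hβσ]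
    rw [himage]
    exact RD.smul_mem_pos hvσ (RD.repr_nonneg hβ i)
      (himage ▸ RD.symm_apply_mem_Φ hv (RD.simpleRefl_mem_Φ i (RD.pos_subset hβ)))

lemma exists_eq_simpleRefl_of_inversions_eq_singleton {v : V ≃ₗ[ℝ] V}
    (hv : v ∈ RD.weylGroup) {β : V} (hΔ : RD.inversions v = {β}) :
    ∃ i, RD.σ i = β ∧ v = RD.simpleRefl i := by
  have hβ := RD.mem_inversions.mp (hΔ ▸ Finset.mem_singleton_self β)
  have hne : v⁻¹ ≠ 1 := by
    rintro hv1
    rw [inv_eq_one.mp hv1] at hβ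
    exact RD.pos_not_neg _ hβ.1 hβ.2
  obtain ⟨i, hi⟩ := RD.exists_neg_mem_pos_of_ne_one (inv_mem hv) hne
  have hσβ : RD.σ i = β := by
    rw [← Finset.mem_singleton, ← hΔ, RD.mem_inversions]
    exact ⟨RD.simple_mem i, hi⟩
  subst hσβ
  refine ⟨i, rfl, inv_mul_eq_one.mp ?_⟩
  exact RD.eq_one_of_forall_mem_pos (mul_mem (inv_mem hv) (RD.simpleRefl_mem_weylGroup i))
    fun β hβ => RD.inv_mul_simpleRefl_mem_pos hv hΔ hβ

end Inversions

end RootSystemData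

theorem inversion_extension_step_general {V : Type*} [AddCommGroup V] [Module ℝ V] {r : ℕ}
    (RD : RootSystemData V r)
    (w w' : V ≃ₗ[ℝ] V) (hw : w ∈ RD.weylGroup) (hw' : w' ∈ RD.weylGroup)
    (α : V) (hαΦ : α ∈ RD.Φ) (hα : α ∉ RD.inversions w)
    (hunion : (RD.inversions w' : Set V) = insert α (RD.inversions w : Set V)) :
    RD.length w' = RD.length w + 1 ∧ w' = RD.refl α hαΦ * w := by
  classical
  have hΔw' : RD.inversions w' = insert α (RD.inversions w) := by exact_mod_cast hunion
  have hΔv : RD.inversions (w⁻¹ * w') = {w.symm α} := by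
    ext β
    rw [RD.mem_inversions_inv_mul_iff hw (hΔw' ▸ Finset.subset_insert α _), hΔw',
      Finset.mem_singleton, LinearEquiv.eq_symm_apply]
    grind
  obtain ⟨i, hσi, hv⟩ := RD.exists_eq_simpleRefl_of_inversions_eq_singleton
    (mul_mem (inv_mem hw) hw') hΔv
  have hw'eq : w' = w * RD.simpleRefl i := by rw [← hv, mul_inv_cancel_left]
  have hwσ : w (RD.σ i) = α := by rw [hσi, w.apply_symm_apply]
  have hw'σ : -(w' (RD.σ i)) ∈ RD.pos := by
    rw [hw'eq, LinearEquiv.mul_apply, RD.simpleRefl_apply_self, map_neg, hwσ, neg_neg]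
    exact (RD.mem_inversions.mp (hΔw' ▸ Finset.mem_insert_self α _)).1
  have hw's : w' * RD.simpleRefl i = w := by
    rw [hw'eq, mul_assoc, RD.simpleRefl_mul_self, mul_one]
  refine ⟨le_antisymm (hw'eq ▸ RD.length_mul_simpleRefl_le hw i) ?_, ?_⟩
  · simpa [hw's] using RD.length_mul_simpleRefl_add_one_le hw' hw'σ
  · rw [← RD.mul_simpleRefl_mul_inv hw i hαΦ (c := 1) (by rw [one_smul, hwσ]), hw'eq,
      inv_mul_cancel_right]

/-- Let `T = Σ_{i ∈ I} T_i` be a sum of fundamental coweights (so `α(T) = Σ_{i∈I}` of the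
simple-root coordinates of `α`). If `w, w'` lie in the Weyl group, `Δ(w)` and `Δ(w')`
consist of roots with `α(T) = 1`, and `Δ(w') = Δ(w) ∪ {α}` for a single root
`α ∉ Δ(w)`, then `length w' = length w + 1` and `w' = r_α * w`. -/
theorem inversion_extension_step {V : Type*} [AddCommGroup V] [Module ℝ V] {r : ℕ}
    (RD : RootSystemData V r) (I : Finset (Fin r))
    (w w' : V ≃ₗ[ℝ] V) (hw : w ∈ RD.weylGroup) (hw' : w' ∈ RD.weylGroup)
    (hΔw : ∀ β ∈ RD.inversions w, ∑ i ∈ I, RD.simpleBasis.repr β i = 1)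
    (hΔw' : ∀ β ∈ RD.inversions w', ∑ i ∈ I, RD.simpleBasis.repr β i = 1)
    (α : V) (hαΦ : α ∈ RD.Φ) (hα : α ∉ RD.inversions w)
    (hunion : (RD.inversions w' : Set V) = insert α (RD.inversions w : Set V)) :
    RD.length w' = RD.length w + 1 ∧ w' = RD.refl α hαΦ * w :=
  inversion_extension_step_general RD w w' hw hw' α hαΦ hα hunion
end
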